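/- arXiv:1710.02697 — 7 statements merged into one kernel-verified Lean document; each statement's English description precedes it below -/
import Mathlib

section
/- If the ω-interior of X is nonempty, then the ω-boundary ∂_ω(X) := X ∖ int_ω(X) is the largest proper ω-extreme subset of X: it is ω-extreme, it is a proper subset of X, and every proper ω-extreme subset F of X satisfies F ⊆ ∂_ω(X). -/
/-- If the ω-interior of X is nonempty, then the ω-boundary is the largest proper
ω-extreme subset of X. -/
theorem omegaBoundary_largest_proper_extreme {X : Type*} [Nonempty X] {Γ : Type*}
    (n : Γ → ℕ) (ω : ∀ γ : Γ, (Fin (n γ) → X) → X)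
    (Extreme : Set X → Prop)
    (hExt : ∀ E, Extreme E ↔
      ∀ (γ : Γ) (x : Fin (n γ) → X), ω γ x ∈ E → ∀ i, x i ∈ E)
    (extHull : Set X → Set X)
    (hHull : ∀ H, extHull H = ⋂₀ {E : Set X | Extreme E ∧ H ⊆ E})
    (intr : Set X) (hintr : intr = {p : X | extHull {p} = Set.univ})
    (bdry : Set X) (hbdry : bdry = intrᶜ)
    (hne : intr.Nonempty) :
    Extreme bdry ∧ bdry ≠ Set.univ ∧
      ∀ F : Set X, Extreme F → F ≠ Set.univ → F ⊆ bdry := by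
  -- basic hull facts
  have hsub : ∀ H, H ⊆ extHull H := by
    intro H x hx
    rw [hHull]
    intro E hE
    exact hE.2 hx
  have hmin : ∀ H E, Extreme E → H ⊆ E → extHull H ⊆ E := by
    intro H E hE hHE x hx
    rw [hHull] at hx
    exact hx E ⟨hE, hHE⟩
  have hhullExt : ∀ H, Extreme (extHull H) := by
    intro H
    rw [hExt]
    intro γ x hx i
    rw [hHull] at hx ⊢
    intro E hE
    exact (hExt E).1 hE.1 γ x (hx E hE) i
  refine ⟨?_, ?_, ?_⟩
  · rw [hExt]
    intro γ x hx i
    rw [hbdry] at hx ⊢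
    intro hxi
    apply hx
    rw [hintr] at hxi ⊢
    have h1 : extHull {x i} ⊆ extHull {ω γ x} := by
      apply hmin
      · exact hhullExt _
      · intro y hy
        rcases hy with rfl
        exact (hExt _).1 (hhullExt {ω γ x}) γ x (hsub _ rfl) i
    exact Set.eq_univ_of_univ_subset (hxi ▸ h1)
  · rw [hbdry]
    rcases hne with ⟨p, hp⟩
    intro h
    have : p ∈ intrᶜ := h ▸ Set.mem_univ p
    exact this hp
  · intro F hF hFne x hx
    rw [hbdry]
    intro hxi
    rw [hintr] at hxi
    apply hFne
    have : extHull {x} ⊆ F := hmin _ _ hF (by intro y hy; rcases hy with rfl; exact hx)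
    exact Set.eq_univ_of_univ_subset (hxi ▸ this)
end

section
/- For the operation ω(x,y) = (x+y)/2 on X = [0,1], the only ω-extreme sets are ∅, {0}, {1}, {0,1}, and [0,1]. -/
lemma midpoint_spread (E : Set ℝ)
    (h : ∀ x ∈ Set.Icc (0:ℝ) 1, ∀ y ∈ Set.Icc (0:ℝ) 1,
        (x + y) / 2 ∈ E → x ∈ E ∧ y ∈ E)
    (z : ℝ) (hz0 : 0 ≤ z) (hz1 : z ≤ 1) (hz : z ∈ E) :
    ∀ n : ℕ, ∀ t, 0 ≤ t → t ≤ 1 → 1 - 2^n * (1-z) ≤ t → t ≤ 2^n * z → t ∈ E := by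
  intro n
  induction n with
  | zero =>
    intro t ht0 ht1 h1 h2
    have : t = z := le_antisymm (by linarith) (by linarith)
    rwa [this]
  | succ n ih =>
    intro t ht0 ht1 h1 h2
    have hpow : (1:ℝ) ≤ 2^n := one_le_pow₀ (by norm_num)
    have hpos : (0:ℝ) < 2^n := by positivity
    set m : ℝ := max (t/2) (1 - 2^n * (1-z)) with hm
    have hm1 : m ≥ t/2 := le_max_left _ _
    have hm2 : m ≥ 1 - 2^n * (1-z) := le_max_right _ _
    have hmle : m ≤ min ((t+1)/2) (min (2^n * z) 1) := by
      apply max_le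
      · refine le_min (by linarith) (le_min ?_ (by linarith))
        have : t ≤ 2 * (2^n * z) := by
          have : (2:ℝ)^(n+1) = 2 * 2^n := by ring
          nlinarith [h2]
        linarith
      · refine le_min ?_ (le_min ?_ ?_)
        · have : (2:ℝ)^(n+1) = 2 * 2^n := by ring
          nlinarith [h1]
        · nlinarith
        · nlinarith
    have hmA : m ≤ (t+1)/2 := le_trans hmle (min_le_left _ _)
    have hmB : m ≤ 2^n * z := le_trans hmle (le_trans (min_le_right _ _) (min_le_left _ _))
    have hmC : m ≤ 1 := le_trans hmle (le_trans (min_le_right _ _) (min_le_right _ _))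
    have hm0 : 0 ≤ m := le_trans (by linarith) hm1
    have hmE : m ∈ E := ih m hm0 hmC hm2 hmB
    set y : ℝ := 2*m - t with hy
    have hy0 : 0 ≤ y := by simp [hy]; linarith
    have hy1 : y ≤ 1 := by simp [hy]; linarith
    have hmid : (t + y) / 2 = m := by rw [hy]; ring
    exact (h t ⟨ht0, ht1⟩ y ⟨hy0, hy1⟩ (by rw [hmid]; exact hmE)).1

/-- For the operation ω(x,y) = (x+y)/2 on [0,1], the only ω-extreme sets are
∅, {0}, {1}, {0,1}, and [0,1]. -/
theorem extreme_sets_of_midpoint (E : Set ℝ) (hE : E ⊆ Set.Icc (0:ℝ) 1) :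
    (∀ x ∈ Set.Icc (0:ℝ) 1, ∀ y ∈ Set.Icc (0:ℝ) 1,
        (x + y) / 2 ∈ E → x ∈ E ∧ y ∈ E) ↔
      E = ∅ ∨ E = {0} ∨ E = {1} ∨ E = {0, 1} ∨ E = Set.Icc (0:ℝ) 1 := by
  constructor
  · intro h
    by_cases hint : ∃ z ∈ E, 0 < z ∧ z < 1
    · obtain ⟨z, hzE, hz0, hz1⟩ := hint
      right; right; right; right
      apply Set.Subset.antisymm hE
      intro t ht
      obtain ⟨n, hn⟩ := pow_unbounded_of_one_lt (max (1/z) (1/(1-z))) (by norm_num : (1:ℝ) < 2)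
      have h1z : (0:ℝ) < 1 - z := by linarith
      have hza : 1/z < 2^n := lt_of_le_of_lt (le_max_left _ _) hn
      have hzb : 1/(1-z) < 2^n := lt_of_le_of_lt (le_max_right _ _) hn
      have hA : (1:ℝ) ≤ 2^n * z := by
        rw [div_lt_iff₀ hz0] at hza; linarith
      have hB : (1:ℝ) ≤ 2^n * (1-z) := by
        rw [div_lt_iff₀ h1z] at hzb; linarith
      exact midpoint_spread E h z (le_of_lt hz0) (le_of_lt hz1) hzE n t ht.1 ht.2
        (by linarith [ht.1]) (by linarith [ht.2])
    · push_neg at hint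
      have hsub : E ⊆ ({0, 1} : Set ℝ) := by
        intro x hx
        have hx' := hE hx
        have := hint x hx
        rcases lt_or_eq_of_le hx'.1 with h0 | h0
        · rcases lt_or_eq_of_le hx'.2 with h1 | h1
          · exact absurd (this h0) (not_le.mpr h1)
          · right; exact h1
        · left; exact h0.symm
      by_cases h0 : (0:ℝ) ∈ E <;> by_cases h1 : (1:ℝ) ∈ E
      · right; right; right; left
        apply Set.Subset.antisymm hsub
        rintro x (rfl | rfl) <;> assumption
      · right; left
        apply Set.Subset.antisymm
        · intro x hx
          rcases hsub hx with rfl | rfl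
          · rfl
          · exact absurd hx h1
        · rintro x rfl; exact h0
      · right; right; left
        apply Set.Subset.antisymm
        · intro x hx
          rcases hsub hx with rfl | rfl
          · exact absurd hx h0
          · rfl
        · rintro x rfl; exact h1
      · left
        ext x
        simp only [Set.mem_empty_iff_false, iff_false]
        intro hx
        rcases hsub hx with rfl | rfl
        · exact h0 hx
        · exact h1 hx
  · rintro (rfl | rfl | rfl | rfl | rfl) x hx y hy hm
    · exact absurd hm (Set.notMem_empty _)
    · simp only [Set.mem_singleton_iff] at hm ⊢
      constructor <;> linarith [hx.1, hy.1]
    · simp only [Set.mem_singleton_iff] at hm ⊢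
      constructor <;> linarith [hx.2, hy.2]
    · simp only [Set.mem_insert_iff, Set.mem_singleton_iff] at hm ⊢
      rcases hm with hm | hm
      · constructor <;> (left; linarith [hx.1, hy.1])
      · constructor <;> (right; linarith [hx.2, hy.2])
    · exact ⟨hx, hy⟩
end

section
/- Let (Y,+,d) be a complete metric abelian group and S a closed, pointed (0 ∈ S), additively controllable subsemigroup of Y. Then the partially ordered set (Y, ≤_S), where x ≤_S y iff y − x ∈ S, is lower chain-complete: every nonempty chain in (Y,≤_S) that is bounded below has an infimum. -/
/-- In a complete metric abelian group, the order generated by a closed, pointed,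
additively controllable subsemigroup is lower chain-complete. -/
theorem lower_chain_complete_of_controllable {Y : Type*} [AddCommGroup Y]
    [MetricSpace Y] [CompleteSpace Y]
    (hinv : ∀ x y z : Y, dist (x + z) (y + z) = dist x y)
    (S : Set Y) (hSclosed : IsClosed S) (hS0 : (0:Y) ∈ S)
    (hSadd : ∀ x ∈ S, ∀ y ∈ S, x + y ∈ S)
    (a : Y → ℝ) (hadd : ∀ x y : Y, a (x + y) = a x + a y) (hcont : Continuous a)
    (hctrl : ∀ y ∈ S, dist y 0 ≤ a y)
    (L : Set Y) (hLne : L.Nonempty)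
    (hchain : ∀ u ∈ L, ∀ v ∈ L, u - v ∈ S ∨ v - u ∈ S)
    (hbdd : ∃ b : Y, ∀ z ∈ L, z - b ∈ S) :
    ∃ ystar : Y, (∀ z ∈ L, z - ystar ∈ S) ∧ ∀ w : Y, (∀ z ∈ L, z - w ∈ S) → ystar - w ∈ S := by
  classical
  have ha0 : a 0 = 0 := by have := hadd 0 0; simp at this; linarith
  have haneg : ∀ x : Y, a (-x) = - a x := by
    intro x; have := hadd x (-x); simp [ha0] at this; linarith
  have hasub : ∀ x y : Y, a (x - y) = a x - a y := by
    intro x y; rw [sub_eq_add_neg, hadd, haneg]; ring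
  have hdist : ∀ u v : Y, dist u v = dist (u - v) 0 := by
    intro u v
    have := hinv (u - v) 0 v
    simpa using this
  have hkey : ∀ u v : Y, u - v ∈ S → dist u v ≤ a u - a v := by
    intro u v h
    rw [hdist, ← hasub]
    exact hctrl _ h
  have hanonneg : ∀ s ∈ S, 0 ≤ a s := fun s hs => le_trans dist_nonneg (hctrl s hs)
  obtain ⟨b, hb⟩ := hbdd
  set α := sInf (a '' L) with hα
  have hbddB : BddBelow (a '' L) := by
    refine ⟨a b, ?_⟩
    rintro _ ⟨zz, hz, rfl⟩
    have := hanonneg _ (hb zz hz)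
    rw [hasub] at this; linarith
  have hne' : (a '' L).Nonempty := hLne.image a
  have hαle : ∀ zz ∈ L, α ≤ a zz := fun zz hz => csInf_le hbddB ⟨zz, hz, rfl⟩
  have hseq : ∀ n : ℕ, ∃ zz ∈ L, a zz < α + 1/(n+1) := by
    intro n
    have hlt : α < α + 1/((n:ℝ)+1) := by
      have : (0:ℝ) < 1/((n:ℝ)+1) := by positivity
      linarith
    obtain ⟨_, ⟨zz, hz, rfl⟩, hlt'⟩ := exists_lt_of_csInf_lt hne' hlt
    exact ⟨zz, hz, hlt'⟩
  choose z hzL hza using hseq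
  have hdev : ∀ n : ℕ, a (z n) - α < 1/((n:ℝ)+1) := by
    intro n; have := hza n; linarith
  have hdevnn : ∀ n : ℕ, 0 ≤ a (z n) - α := fun n => by
    have := hαle _ (hzL n); linarith
  have hcauchy : CauchySeq z := by
    refine cauchySeq_of_le_tendsto_0 (fun N => 2/((N:ℝ)+1)) ?_ ?_
    · intro n m N hn hm
      have hNn : (1:ℝ)/((n:ℝ)+1) ≤ 1/((N:ℝ)+1) := by gcongr <;> exact_mod_cast hn
      have hNm : (1:ℝ)/((m:ℝ)+1) ≤ 1/((N:ℝ)+1) := by gcongr <;> exact_mod_cast hm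
      have h2 : (2:ℝ)/((N:ℝ)+1) = 1/((N:ℝ)+1) + 1/((N:ℝ)+1) := by ring
      have hN0 : (0:ℝ) ≤ 1/((N:ℝ)+1) := by positivity
      rcases hchain _ (hzL n) _ (hzL m) with h | h
      · have := hkey _ _ h
        have h1 := hdev n; have h2' := hdevnn m
        show dist (z n) (z m) ≤ 2/((N:ℝ)+1)
        linarith
      · have := hkey _ _ h
        have h1 := hdev m; have h2' := hdevnn n
        show dist (z n) (z m) ≤ 2/((N:ℝ)+1)
        rw [dist_comm]
        linarith
    · have h1 : Filter.Tendsto (fun n : ℕ => 1/((n:ℝ)+1)) Filter.atTop (nhds 0) :=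
        tendsto_one_div_add_atTop_nhds_zero_nat
      have := h1.const_mul (2:ℝ)
      simp only [mul_zero] at this
      convert this using 2 with n
      ring
  obtain ⟨ystar, hy⟩ := cauchySeq_tendsto_of_complete hcauchy
  have hdy : Filter.Tendsto (fun n => dist (z n) ystar) Filter.atTop (nhds 0) :=
    tendsto_iff_dist_tendsto_zero.mp hy
  have hnegdist : ∀ x : Y, dist (-x) 0 = dist x 0 := by
    intro x
    have := hinv (-x) 0 x
    simp at this
    rw [← this]
    exact dist_comm _ _
  refine ⟨ystar, ?_, ?_⟩
  · intro zz hzz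
    set u : ℕ → Y := fun n => if zz - z n ∈ S then zz - z n else 0 with hu
    have huS : ∀ n, u n ∈ S := by
      intro n; simp only [hu]
      split <;> [assumption; exact hS0]
    have hud : ∀ n, dist (u n) (zz - ystar) ≤ 1/((n:ℝ)+1) + dist (z n) ystar := by
      intro n
      have hsecond : dist (zz - z n) (zz - ystar) = dist (z n) ystar := by
        rw [hdist]
        have : zz - z n - (zz - ystar) = ystar - z n := by abel
        rw [this, ← hdist, dist_comm]
      calc dist (u n) (zz - ystar) ≤ dist (u n) (zz - z n) + dist (zz - z n) (zz - ystar) :=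
            dist_triangle _ _ _
        _ ≤ 1/((n:ℝ)+1) + dist (z n) ystar := by
            rw [hsecond]
            gcongr
            simp only [hu]
            split
            · simp only [dist_self]
              positivity
            · rename_i hnot
              rcases hchain _ hzz _ (hzL n) with h | h
              · exact absurd h hnot
              · have h1 : dist (0:Y) (zz - z n) = dist (z n - zz) 0 := by
                  rw [dist_comm, ← hnegdist]; congr 1; abel
                rw [h1]
                have h2 := hkey _ _ h
                rw [hdist] at h2
                have h3 := hαle _ hzz
                have h4 := hdev n
                linarith
    have htendsto : Filter.Tendsto u Filter.atTop (nhds (zz - ystar)) := by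
      rw [tendsto_iff_dist_tendsto_zero]
      apply squeeze_zero (fun n => dist_nonneg) hud
      have h1 : Filter.Tendsto (fun n : ℕ => 1/((n:ℝ)+1)) Filter.atTop (nhds 0) :=
        tendsto_one_div_add_atTop_nhds_zero_nat
      have := h1.add hdy
      simpa using this
    exact hSclosed.mem_of_tendsto htendsto (Filter.Eventually.of_forall huS)
  · intro w hw
    have htendsto : Filter.Tendsto (fun n => z n - w) Filter.atTop (nhds (ystar - w)) := by
      rw [tendsto_iff_dist_tendsto_zero]
      have heq : ∀ n, dist (z n - w) (ystar - w) = dist (z n) ystar := by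
        intro n
        rw [hdist]
        have : z n - w - (ystar - w) = z n - ystar := by abel
        rw [this, ← hdist]
      simpa only [heq] using hdy
    exact hSclosed.mem_of_tendsto htendsto
      (Filter.Eventually.of_forall fun n => hw _ (hzL n))
end

section
/- Let Y be a Banach space and K ⊆ Y a sharp closed convex cone, inducing the partial order x ≤_K y ⟺ y − x ∈ K. Then (Y, ≤_K) is lower chain-complete: every nonempty lower bounded chain in (Y, ≤_K) has an infimum. -/
/-!
A functional `φ` in the interior of the dual cone is uniformly positive on the cone:
`ε ‖y‖ ≤ φ y` for `y ∈ K`. Along a chain this turns `φ`-gaps into norm bounds, so a sequence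
in the chain minimizing `φ` is Cauchy. Its limit is a lower bound of the chain, since every
element of the chain either lies above infinitely many terms or is their limit, and it is the
greatest one because `K` is closed.
-/

open Filter Topology Metric Set

section DualCone

variable {Y : Type*} [NormedAddCommGroup Y] [NormedSpace ℝ Y]

def dualCone (K : Set Y) : Set (Y →L[ℝ] ℝ) := {ψ | ∀ y ∈ K, 0 ≤ ψ y}

variable {K : Set Y} {φ : Y →L[ℝ] ℝ}

theorem mul_norm_le_of_closedBall_subset_dualCone {ε : ℝ} (hε : 0 ≤ ε)
    (hball : closedBall φ ε ⊆ dualCone K) {y : Y} (hy : y ∈ K) : ε * ‖y‖ ≤ φ y := by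
  obtain ⟨g, hg, hgy⟩ := exists_dual_vector'' ℝ y
  have hmem : φ - ε • g ∈ closedBall φ ε := by
    rw [mem_closedBall, dist_eq_norm, sub_sub_cancel_left, norm_neg, norm_smul,
      Real.norm_of_nonneg hε]
    exact mul_le_of_le_one_right hε hg
  have := hball hmem y hy
  simp only [sub_apply, smul_apply, smul_eq_mul, hgy, RCLike.ofReal_real_eq_id, id] at this
  linarith

theorem exists_pos_mul_norm_le_of_mem_interior_dualCone (hφ : φ ∈ interior (dualCone K)) :
    ∃ ε > 0, ∀ y ∈ K, ε * ‖y‖ ≤ φ y := by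
  obtain ⟨ε, hε, hball⟩ := nhds_basis_closedBall.mem_iff.1 (mem_interior_iff_mem_nhds.1 hφ)
  exact ⟨ε, hε, fun y hy => mul_norm_le_of_closedBall_subset_dualCone hε.le hball hy⟩

end DualCone

theorem exists_seq_mem_antitone_tendsto_sInf_image {α : Type*} {f : α → ℝ} {s : Set α}
    (hs : s.Nonempty) (hf : BddBelow (f '' s)) :
    ∃ z : ℕ → α, (∀ n, z n ∈ s) ∧ Antitone (f ∘ z) ∧ Tendsto (f ∘ z) atTop (𝓝 (sInf (f '' s))) := by
  obtain ⟨u, hanti, htend, hmem⟩ := exists_seq_tendsto_sInf (hs.image f) hf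
  choose z hzs hfz using hmem
  have hu : f ∘ z = u := funext hfz
  exact ⟨z, hzs, hu ▸ hanti, hu ▸ htend⟩

section Chain

variable {Y : Type*} [NormedAddCommGroup Y] [NormedSpace ℝ Y] {K L : Set Y}
  {φ : Y →L[ℝ] ℝ} {ε m : ℝ} {z : ℕ → Y}

theorem norm_sub_le_of_sub_mem (hε : 0 < ε) (hKφ : ∀ y ∈ K, ε * ‖y‖ ≤ φ y) {u v : Y}
    (hu : m ≤ φ u) (hvu : v - u ∈ K) : ‖v - u‖ ≤ (φ v - m) / ε := by
  rw [le_div_iff₀' hε]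
  linarith [hKφ _ hvu, map_sub φ v u]

theorem tendsto_sub_div_zero (ε : ℝ) (htend : Tendsto (φ ∘ z) atTop (𝓝 m)) :
    Tendsto (fun n => (φ (z n) - m) / ε) atTop (𝓝 0) := by
  simpa using (htend.sub_const m).div_const ε

theorem cauchySeq_of_antitone_of_chain (hε : 0 < ε) (hKφ : ∀ y ∈ K, ε * ‖y‖ ≤ φ y)
    (hchain : ∀ u ∈ L, ∀ v ∈ L, u - v ∈ K ∨ v - u ∈ K) (hm : ∀ u ∈ L, m ≤ φ u)
    (hzL : ∀ n, z n ∈ L) (hanti : Antitone (φ ∘ z)) (htend : Tendsto (φ ∘ z) atTop (𝓝 m)) :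
    CauchySeq z := by
  have hgap : ∀ N n, N ≤ n → ∀ u ∈ L, z n - u ∈ K → ‖z n - u‖ ≤ (φ (z N) - m) / ε :=
    fun N n hNn u hu hK => (norm_sub_le_of_sub_mem hε hKφ (hm u hu) hK).trans <|
      div_le_div_of_nonneg_right (sub_le_sub_right (hanti hNn) m) hε.le
  refine cauchySeq_of_le_tendsto_0 _ (fun n k N hn hk => ?_) (tendsto_sub_div_zero ε htend)
  rw [dist_eq_norm]
  rcases hchain _ (hzL n) _ (hzL k) with h | h
  · exact hgap N n hn _ (hzL k) h
  · exact norm_sub_rev (z n) (z k) ▸ hgap N k hk _ (hzL n) h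

theorem sub_mem_of_tendsto_of_chain (hK : IsClosed K) (hK0 : (0 : Y) ∈ K) (hε : 0 < ε)
    (hKφ : ∀ y ∈ K, ε * ‖y‖ ≤ φ y) (hchain : ∀ u ∈ L, ∀ v ∈ L, u - v ∈ K ∨ v - u ∈ K)
    (hm : ∀ u ∈ L, m ≤ φ u) (hzL : ∀ n, z n ∈ L) (htend : Tendsto (φ ∘ z) atTop (𝓝 m))
    {y : Y} (hlim : Tendsto z atTop (𝓝 y)) {u : Y} (hu : u ∈ L) : u - y ∈ K := by
  by_cases hfreq : ∃ᶠ n in atTop, u - z n ∈ K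
  · exact hK.mem_of_frequently_of_tendsto hfreq (tendsto_const_nhds.sub hlim)
  · have habove : ∀ᶠ n in atTop, z n - u ∈ K :=
      (not_frequently.1 hfreq).mono fun n hn => (hchain _ (hzL n) _ hu).resolve_right hn
    have hzu : Tendsto z atTop (𝓝 u) :=
      tendsto_iff_norm_sub_tendsto_zero.2 <|
        squeeze_zero' (Eventually.of_forall fun _ => norm_nonneg _)
          (habove.mono fun _ h => norm_sub_le_of_sub_mem hε hKφ (hm u hu) h)
          (tendsto_sub_div_zero ε htend)
    rwa [tendsto_nhds_unique hlim hzu, sub_self]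

theorem exists_greatest_lower_bound_of_chain [CompleteSpace Y] (hK : IsClosed K) (hK0 : (0 : Y) ∈ K)
    (hε : 0 < ε) (hKφ : ∀ y ∈ K, ε * ‖y‖ ≤ φ y) (hLne : L.Nonempty)
    (hchain : ∀ u ∈ L, ∀ v ∈ L, u - v ∈ K ∨ v - u ∈ K) (hbdd : ∃ b : Y, ∀ z ∈ L, z - b ∈ K) :
    ∃ y : Y, (∀ z ∈ L, z - y ∈ K) ∧ ∀ w : Y, (∀ z ∈ L, z - w ∈ K) → y - w ∈ K := by
  obtain ⟨b, hb⟩ := hbdd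
  have hφL : BddBelow (φ '' L) := by
    refine ⟨φ b, forall_mem_image.2 fun u hu => ?_⟩
    have := hKφ _ (hb u hu)
    rw [map_sub] at this
    linarith [mul_nonneg hε.le (norm_nonneg (u - b))]
  obtain ⟨z, hzL, hanti, htend⟩ := exists_seq_mem_antitone_tendsto_sInf_image hLne hφL
  have hm : ∀ u ∈ L, sInf (φ '' L) ≤ φ u := fun u hu => csInf_le hφL (mem_image_of_mem φ hu)
  obtain ⟨y, hlim⟩ :=
    cauchySeq_tendsto_of_complete (cauchySeq_of_antitone_of_chain hε hKφ hchain hm hzL hanti htend)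
  refine ⟨y, fun u hu => sub_mem_of_tendsto_of_chain hK hK0 hε hKφ hchain hm hzL htend hlim hu,
    fun w hw => ?_⟩
  exact hK.mem_of_tendsto (hlim.sub_const w) (Eventually.of_forall fun n => hw _ (hzL n))

end Chain

theorem lower_chain_complete_of_sharp_cone_general {Y : Type*} [NormedAddCommGroup Y]
    [NormedSpace ℝ Y] [CompleteSpace Y]
    (K : Set Y) (hKclosed : IsClosed K) (hK0 : (0:Y) ∈ K)
    (hsharp : (interior {ψ : Y →L[ℝ] ℝ | ∀ y ∈ K, 0 ≤ ψ y}).Nonempty)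
    (L : Set Y) (hLne : L.Nonempty)
    (hchain : ∀ u ∈ L, ∀ v ∈ L, u - v ∈ K ∨ v - u ∈ K)
    (hbdd : ∃ b : Y, ∀ z ∈ L, z - b ∈ K) :
    ∃ ystar : Y, (∀ z ∈ L, z - ystar ∈ K) ∧ ∀ w : Y, (∀ z ∈ L, z - w ∈ K) → ystar - w ∈ K := by
  obtain ⟨φ, hφ⟩ := hsharp
  obtain ⟨ε, hε, hKφ⟩ := exists_pos_mul_norm_le_of_mem_interior_dualCone (K := K) hφ
  exact exists_greatest_lower_bound_of_chain hKclosed hK0 hε hKφ hLne hchain hbdd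

/-- In a Banach space, the order generated by a sharp closed convex cone is lower
chain-complete. -/
theorem lower_chain_complete_of_sharp_cone {Y : Type*} [NormedAddCommGroup Y]
    [NormedSpace ℝ Y] [CompleteSpace Y]
    (K : Set Y) (hKclosed : IsClosed K) (hKconv : Convex ℝ K) (hK0 : (0:Y) ∈ K)
    (hKcone : ∀ y ∈ K, ∀ c : ℝ, 0 ≤ c → c • y ∈ K)
    (hsharp : (interior {ψ : Y →L[ℝ] ℝ | ∀ y ∈ K, 0 ≤ ψ y}).Nonempty)
    (L : Set Y) (hLne : L.Nonempty)
    (hchain : ∀ u ∈ L, ∀ v ∈ L, u - v ∈ K ∨ v - u ∈ K)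
    (hbdd : ∃ b : Y, ∀ z ∈ L, z - b ∈ K) :
    ∃ ystar : Y, (∀ z ∈ L, z - ystar ∈ K) ∧ ∀ w : Y, (∀ z ∈ L, z - w ∈ K) → ystar - w ∈ K :=
  lower_chain_complete_of_sharp_cone_general K hKclosed hK0 hsharp L hLne hchain hbdd
end

section
/- In a finite dimensional normed space Y, every closed convex salient cone K (i.e., K ∩ (−K) ⊆ {0}) is sharp, i.e., the dual cone K° := {φ ∈ Y* : φ ≥ 0 on K} has nonempty interior. -/
/-! By the bipolar theorem, a point on which every functional of `K°` vanishes lies in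
`K ∩ (-K) = {0}`. Hence `K°` spans the finite dimensional dual space, and a convex set containing
`0` that spans a finite dimensional space has nonempty interior. -/

theorem Convex.add_mem_of_smul_mem {𝕜 E : Type*} [Field 𝕜] [LinearOrder 𝕜]
    [IsStrictOrderedRing 𝕜] [AddCommGroup E] [Module 𝕜 E] {K : Set E} (hconv : Convex 𝕜 K)
    (hsmul : ∀ y ∈ K, ∀ c : 𝕜, 0 ≤ c → c • y ∈ K) {x y : E} (hx : x ∈ K) (hy : y ∈ K) :
    x + y ∈ K := by
  have hmid : (1 / 2 : 𝕜) • x + (1 / 2 : 𝕜) • y ∈ K :=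
    hconv hx hy (by positivity) (by positivity) (add_halves 1)
  convert hsmul _ hmid 2 zero_le_two using 1
  module

def ProperCone.ofConvex {𝕜 E : Type*} [Field 𝕜] [LinearOrder 𝕜] [IsStrictOrderedRing 𝕜]
    [AddCommGroup E] [Module 𝕜 E] [TopologicalSpace E] (K : Set E) (hclosed : IsClosed K)
    (hconv : Convex 𝕜 K) (hzero : (0 : E) ∈ K) (hsmul : ∀ y ∈ K, ∀ c : 𝕜, 0 ≤ c → c • y ∈ K) :
    ProperCone 𝕜 E where
  carrier := K
  add_mem' := hconv.add_mem_of_smul_mem hsmul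
  zero_mem' := hzero
  smul_mem' c _ hy := hsmul _ hy c c.2
  isClosed' := hclosed

theorem ProperCone.span_dual_eq_top {E F : Type*} [TopologicalSpace E] [AddCommGroup E]
    [IsTopologicalAddGroup E] [Module ℝ E] [ContinuousSMul ℝ E] [LocallyConvexSpace ℝ E]
    [TopologicalSpace F] [AddCommGroup F] [IsTopologicalAddGroup F] [Module ℝ F]
    [ContinuousSMul ℝ F] [T2Space F] [FiniteDimensional ℝ F]
    {p : E →ₗ[ℝ] F →ₗ[ℝ] ℝ} [p.IsContPerfPair] (C : ProperCone ℝ E)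
    (hC : (C : ConvexCone ℝ E).Salient) :
    Submodule.span ℝ (dual p C : Set F) = ⊤ := by
  by_contra hne
  obtain ⟨Λ, hΛ, hker⟩ :=
    (Submodule.span ℝ (dual p C : Set F)).exists_le_ker_of_lt_top (lt_top_iff_ne_top.2 hne)
  obtain ⟨x, hx⟩ := p.toContPerfPair.surjective ⟨Λ, Λ.continuous_of_finiteDimensional⟩
  replace hx : p x = Λ := congrArg ContinuousLinearMap.toLinearMap hx
  have hvanish : ∀ φ ∈ dual p C, p x φ = 0 := fun φ hφ => by
    simpa [← hx] using hker (Submodule.subset_span hφ)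
  have mem_of_vanish : ∀ z, (∀ φ ∈ dual p C, p z φ = 0) → z ∈ C := fun z hz => by
    rw [← dual_flip_dual p C]
    exact fun φ hφ => (hz φ hφ).ge
  have hx0 : x = 0 := by
    by_contra h
    exact hC x (mem_of_vanish x hvanish) h (mem_of_vanish (-x) (by simpa using hvanish))
  exact hΛ (by rw [← hx, hx0, map_zero])

theorem Convex.interior_nonempty_of_span_eq_top {E : Type*} [NormedAddCommGroup E]
    [NormedSpace ℝ E] [FiniteDimensional ℝ E] {s : Set E} (hs : Convex ℝ s) (hzero : (0 : E) ∈ s)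
    (hspan : Submodule.span ℝ s = ⊤) : (interior s).Nonempty := by
  rw [hs.interior_nonempty_iff_affineSpan_eq_top,
    AffineSubspace.affineSpan_eq_top_iff_vectorSpan_eq_top_of_nonempty ℝ E E ⟨0, hzero⟩,
    vectorSpan_eq_span_vsub_set_right ℝ hzero]
  simpa using hspan

/-- In a finite dimensional normed space, every closed convex salient cone is sharp. -/
theorem salient_cone_sharp {Y : Type*} [NormedAddCommGroup Y] [NormedSpace ℝ Y]
    [FiniteDimensional ℝ Y]
    (K : Set Y) (hKclosed : IsClosed K) (hKconv : Convex ℝ K) (hK0 : (0:Y) ∈ K)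
    (hKcone : ∀ y ∈ K, ∀ c : ℝ, 0 ≤ c → c • y ∈ K)
    (hsalient : ∀ y, y ∈ K → -y ∈ K → y = 0) :
    (interior {φ : Y →L[ℝ] ℝ | ∀ y ∈ K, 0 ≤ φ y}).Nonempty := by
  let C := ProperCone.ofConvex K hKclosed hKconv hK0 hKcone
  have hspan := C.span_dual_eq_top (p := (topDualPairing ℝ Y).flip)
    fun y hy hy0 hneg => hy0 (hsalient y hy hneg)
  exact (ProperCone.dual _ (C : Set Y)).convex.interior_nonempty_of_span_eq_top
    (ProperCone.dual _ _).zero_mem hspan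
end

section
/- Suppose each Ω_γ is an order isomorphism of Y in each variable (in particular nondecreasing), D ⊆ X is ω-convex, and the family {f_δ : D → Y | δ ∈ Δ} of (ω,Ω)-convex functions is a chain under the pointwise order, such that f(x) := inf_δ f_δ(x) exists for every x ∈ D. Then f is (ω,Ω)-convex on D. -/
/-- The pointwise infimum of a chain of (ω,Ω)-convex functions is (ω,Ω)-convex,
provided each Ω_γ is an order isomorphism of Y in each of its variables. -/
theorem inf_of_chain_of_convex_is_convex {X Y : Type*} [PartialOrder Y] {Γ : Type*}
    (n : Γ → ℕ) (ω : ∀ γ : Γ, (Fin (n γ) → X) → X)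
    (Ω : ∀ γ : Γ, (Fin (n γ) → Y) → Y)
    (hiso : ∀ (γ : Γ) (y : Fin (n γ) → Y) (i : Fin (n γ)),
      Function.Bijective (fun t : Y => Ω γ (Function.update y i t)) ∧
      ∀ t₁ t₂ : Y, t₁ ≤ t₂ ↔ Ω γ (Function.update y i t₁) ≤ Ω γ (Function.update y i t₂))
    (D : Set X) (hD : ∀ (γ : Γ) (x : Fin (n γ) → X), (∀ i, x i ∈ D) → ω γ x ∈ D)
    {Δ : Type*} [Nonempty Δ] (f : Δ → X → Y)
    (hconv : ∀ (δ : Δ) (γ : Γ) (x : Fin (n γ) → X), (∀ i, x i ∈ D) →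
      f δ (ω γ x) ≤ Ω γ (fun i => f δ (x i)))
    (hchain : ∀ δ₁ δ₂ : Δ, (∀ x ∈ D, f δ₁ x ≤ f δ₂ x) ∨ (∀ x ∈ D, f δ₂ x ≤ f δ₁ x))
    (F : X → Y) (hF : ∀ x ∈ D, IsGLB {y : Y | ∃ δ : Δ, y = f δ x} (F x)) :
    ∀ (γ : Γ) (x : Fin (n γ) → X), (∀ i, x i ∈ D) →
      F (ω γ x) ≤ Ω γ (fun i => F (x i)) := by
  intro γ x hx
  -- Ω γ is monotone (coordinatewise, by the order-iso property in each variable)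
  have mono : ∀ u v : Fin (n γ) → Y, (∀ i, u i ≤ v i) → Ω γ u ≤ Ω γ v := by
    intro u v huv
    have key : ∀ k : ℕ, k ≤ n γ →
        Ω γ u ≤ Ω γ (fun i => if i.val < k then v i else u i) := by
      intro k
      induction k with
      | zero => intro _; simp
      | succ k ih =>
        intro hk
        have hk' : k < n γ := hk
        refine le_trans (ih (le_of_lt hk')) ?_
        set g : Fin (n γ) → Y := fun i => if i.val < k then v i else u i with hg
        have h1 : g = Function.update g ⟨k, hk'⟩ (u ⟨k, hk'⟩) := by
          funext i
          rcases eq_or_ne i ⟨k, hk'⟩ with h | h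
          · subst h; simp [hg]
          · simp [Function.update_of_ne h]
        have h2 : (fun i : Fin (n γ) => if i.val < k+1 then v i else u i)
            = Function.update g ⟨k, hk'⟩ (v ⟨k, hk'⟩) := by
          funext i
          rcases eq_or_ne i ⟨k, hk'⟩ with h | h
          · subst h; simp
          · rw [Function.update_of_ne h, hg]
            have hne : i.val ≠ k := fun hh => h (Fin.ext hh)
            by_cases hik : i.val < k
            · simp [hik, Nat.lt_succ_of_lt hik]
            · have h3 : ¬ i.val < k + 1 := by omega
              simp [hik, h3]
        rw [h2]
        conv_lhs => rw [h1]
        exact ((hiso γ g ⟨k, hk'⟩).2 _ _).1 (huv _)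
    have := key (n γ) le_rfl
    have heq : (fun i : Fin (n γ) => if i.val < n γ then v i else u i) = v := by
      funext i; simp [i.is_lt]
    rwa [heq] at this
  -- any finite collection in the chain has a common minorant
  have chainmin : ∀ (m : ℕ) (δs : Fin m → Δ),
      ∃ δ : Δ, ∀ i, ∀ z ∈ D, f δ z ≤ f (δs i) z := by
    intro m
    induction m with
    | zero => intro δs; exact ⟨Classical.arbitrary Δ, fun i => i.elim0⟩
    | succ m ih =>
      intro δs
      obtain ⟨δ', hδ'⟩ := ih (fun i => δs i.succ)
      rcases hchain δ' (δs 0) with h | h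
      · exact ⟨δ', fun i => Fin.cases (fun z hz => h z hz)
          (fun j z hz => hδ' j z hz) i⟩
      · exact ⟨δs 0, fun i => Fin.cases (fun z hz => le_rfl)
          (fun j z hz => le_trans (h z hz) (hδ' j z hz)) i⟩
  have hxω : ω γ x ∈ D := hD γ x hx
  -- base step: for arbitrary choices of δ in each coordinate
  have stepB : ∀ δs : Fin (n γ) → Δ,
      F (ω γ x) ≤ Ω γ (fun i => f (δs i) (x i)) := by
    intro δs
    obtain ⟨δ, hδ⟩ := chainmin (n γ) δs
    have h1 : F (ω γ x) ≤ f δ (ω γ x) := (hF _ hxω).1 ⟨δ, rfl⟩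
    exact h1.trans ((hconv δ γ x hx).trans (mono _ _ fun i => hδ i (x i) (hx i)))
  -- order isomorphisms map GLBs to GLBs
  have glbmap : ∀ (e : Y → Y), Function.Bijective e →
      (∀ t₁ t₂ : Y, t₁ ≤ t₂ ↔ e t₁ ≤ e t₂) →
      ∀ (S : Set Y) (a : Y), IsGLB S a → IsGLB (e '' S) (e a) := by
    intro e hbij hmono S a ha
    constructor
    · rintro _ ⟨s, hs, rfl⟩
      exact (hmono a s).1 (ha.1 hs)
    · intro b hb
      obtain ⟨c, rfl⟩ := hbij.2 b
      exact (hmono c a).1 (ha.2 fun s hs => (hmono c s).2 (hb ⟨s, hs, rfl⟩))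
  -- main induction: replace f (δs i) (x i) by F (x i), one coordinate at a time
  have main : ∀ k : ℕ, k ≤ n γ → ∀ δs : Fin (n γ) → Δ,
      F (ω γ x) ≤ Ω γ (fun i => if i.val < k then F (x i) else f (δs i) (x i)) := by
    intro k
    induction k with
    | zero => intro _ δs; simpa using stepB δs
    | succ k ih =>
      intro hk δs
      have hk' : k < n γ := hk
      set i0 : Fin (n γ) := ⟨k, hk'⟩ with hi0
      set base : Fin (n γ) → Y :=
        fun i => if i.val < k then F (x i) else f (δs i) (x i) with hbase
      have hglb : IsGLB ((fun t => Ω γ (Function.update base i0 t)) ''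
          {y | ∃ δ : Δ, y = f δ (x i0)}) (Ω γ (Function.update base i0 (F (x i0)))) :=
        glbmap _ (hiso γ base i0).1 (hiso γ base i0).2 _ _ (hF (x i0) (hx i0))
      have hlb : F (ω γ x) ∈ lowerBounds ((fun t => Ω γ (Function.update base i0 t)) ''
          {y | ∃ δ : Δ, y = f δ (x i0)}) := by
        rintro _ ⟨_, ⟨δ, rfl⟩, rfl⟩
        have heq : Function.update base i0 (f δ (x i0))
            = fun i => if i.val < k then F (x i) else f (Function.update δs i0 δ i) (x i) := by
          funext i
          rcases eq_or_ne i i0 with h | h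
          · subst h
            simp [hi0]
          · rw [Function.update_of_ne h, Function.update_of_ne h, hbase]
        have := ih (le_of_lt hk') (Function.update δs i0 δ)
        simpa [heq] using this
      have hfin : F (ω γ x) ≤ Ω γ (Function.update base i0 (F (x i0))) := hglb.2 hlb
      have heq2 : Function.update base i0 (F (x i0))
          = fun i => if i.val < k + 1 then F (x i) else f (δs i) (x i) := by
        funext i
        rcases eq_or_ne i i0 with h | h
        · subst h; simp [hi0]
        · rw [Function.update_of_ne h, hbase]
          have hne : i.val ≠ k := fun hh => h (Fin.ext hh)
          by_cases hik : i.val < k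
          · simp [hik, Nat.lt_succ_of_lt hik]
          · have h3 : ¬ i.val < k + 1 := by omega
            simp [hik, h3]
      rwa [heq2] at hfin
  have := main (n γ) le_rfl (fun _ => Classical.arbitrary Δ)
  have heq : (fun i : Fin (n γ) => if i.val < n γ then F (x i)
      else f (Classical.arbitrary Δ) (x i)) = fun i => F (x i) := by
    funext i; simp [i.is_lt]
  rwa [heq] at this
end

section
/- Let X be a midconvex subset of a uniquely 2-divisible abelian group G, let a : G → G be additive, and define ω(x,y) := a(x) + y − a(y). If X is ω-convex (i.e., ω(X×X) ⊆ X), then every relative algebraic interior point of X is an ω-internal point of X: for p ∈ ri(X), the ω-extreme hull of {p} within X equals X. -/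
/-- Let X be a midconvex subset of a uniquely 2-divisible abelian group G, let
a : G → G be additive and ω(x,y) := a(x) + y − a(y). If X is ω-convex, then every
relative algebraic interior point p of X is ω-internal: the ω-extreme hull of {p}
within X equals X. -/
theorem ri_subset_omega_interior {G : Type*} [AddCommGroup G]
    (h2 : ∀ x : G, ∃! y : G, y + y = x)
    (X : Set G)
    (hmid : ∀ x ∈ X, ∀ y ∈ X, ∀ z : G, z + z = x + y → z ∈ X)
    (a : G → G) (hadd : ∀ x y : G, a (x + y) = a x + a y)
    (hconv : ∀ x ∈ X, ∀ y ∈ X, a x + y - a y ∈ X)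
    (p : G) (hp : p ∈ X)
    (hri : ∀ x ∈ X, ∃ n : ℕ, ∃ q ∈ X, (2 ^ n : ℕ) • (q - p) = p - x) :
    ⋂₀ {E : Set G | E ⊆ X ∧
        (∀ x ∈ X, ∀ y ∈ X, a x + y - a y ∈ E → x ∈ E ∧ y ∈ E) ∧ p ∈ E} = X := by
  -- basic additivity facts
  have ha0 : a 0 = 0 := by
    have h := hadd 0 0
    rwa [add_zero, left_eq_add] at h
  have haneg : ∀ z : G, a (-z) = - a z := by
    intro z
    have h := hadd z (-z)
    rw [add_neg_cancel, ha0] at h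
    exact eq_neg_of_add_eq_zero_right h.symm
  have hasub : ∀ z w : G, a (z - w) = a z - a w := by
    intro z w
    rw [sub_eq_add_neg, hadd, haneg, sub_eq_add_neg]
  apply Set.Subset.antisymm
  · intro z hz
    exact hz X ⟨subset_rfl, fun x hx y hy _ => ⟨hx, hy⟩, hp⟩
  · intro x hx E hE
    obtain ⟨hEX, hext, hpE⟩ := hE
    -- midpoint extremeness: if m ∈ E is the midpoint of u, v ∈ X, then u ∈ E
    have hmidu : ∀ m ∈ E, ∀ u ∈ X, ∀ v ∈ X, m + m = u + v → u ∈ E := by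
      intro m hmE u huX v hvX hm2
      have hmX : m ∈ X := hEX hmE
      have hw1X : a m + v - a v ∈ X := hconv m hmX v hvX
      have hw2X : a u + m - a m ∈ X := hconv u huX m hmX
      have hv : v = m + m - u := by rw [hm2]; abel
      have hkey : a (a m + v - a v) + (a u + m - a m) - a (a u + m - a m) = m := by
        subst hv
        simp only [hadd, hasub]
        abel
      have h1 := hext _ hw1X _ hw2X (by rw [hkey]; exact hmE)
      exact (hext u huX m hmX h1.2).1
    have hmid2 : ∀ m ∈ E, ∀ u ∈ X, ∀ v ∈ X, m + m = u + v → u ∈ E ∧ v ∈ E := by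
      intro m hmE u huX v hvX hm2
      exact ⟨hmidu m hmE u huX v hvX hm2,
             hmidu m hmE v hvX u huX (by rw [hm2]; abel)⟩
    obtain ⟨n, q, hqX, hq⟩ := hri x hx
    set y : ℕ → G := fun k => p + (2 ^ k : ℕ) • (p - q) with hy
    have hyx : y n = x := by
      have h : (2 ^ n : ℕ) • (p - q) = x - p := by
        rw [show p - q = -(q - p) by abel, smul_neg, hq]; abel
      simp only [hy, h]; abel
    have hstep : ∀ k, y k + y k = y (k + 1) + p := by
      intro k
      simp only [hy]
      rw [pow_succ, mul_comm, mul_smul, two_smul]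
      abel
    have hyX : ∀ j, j ≤ n → y (n - j) ∈ X := by
      intro j
      induction j with
      | zero => intro _; simpa [hyx] using hx
      | succ j ih =>
        intro hjn
        have hj : j ≤ n := Nat.le_of_succ_le hjn
        have h1 : y (n - j) ∈ X := ih hj
        have h2 : n - j = (n - (j + 1)) + 1 := by omega
        apply hmid (y (n - j)) h1 p hp
        rw [h2, ← hstep]
    have h0X : y 0 ∈ X := by simpa using hyX n le_rfl
    have hy0E : y 0 ∈ E := by
      refine (hmid2 p hpE (y 0) h0X q hqX ?_).1
      simp only [hy, pow_zero, one_smul]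
      abel
    have hyE : ∀ k, k ≤ n → y k ∈ E := by
      intro k
      induction k with
      | zero => intro _; exact hy0E
      | succ k ih =>
        intro hk
        have hkE := ih (Nat.le_of_succ_le hk)
        have hX1 : y (k + 1) ∈ X := by
          have h := hyX (n - (k + 1)) (Nat.sub_le _ _)
          rwa [Nat.sub_sub_self hk] at h
        exact (hmid2 (y k) hkE (y (k + 1)) hX1 p hp (hstep k)).1
    have hfin := hyE n le_rfl
    rwa [hyx] at hfin
end
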